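/- For the tensor forward propagation A_{j+1} = σ(W_j * A_j + B_j) with elementwise activation σ, the gradient of a scalar loss M with respect to W_j satisfies δW_j = (δA_{j+1} ⊙ σ'(Z_{j+1})) * A_j^T, where Z_{j+1} = W_j * A_j + B_j, δA_{j+1} = ∂M/∂A_{j+1}, ⊙ is the elementwise product, and * is the T-product. -/

import Mathlib

open Matrix

/-- Block circulant matrix of a third-order tensor, given by its frontal slices
(zero-based): the `(i, j)` block is the slice `A (i - j)` (subtraction mod `p`). -/
def bcirc {R : Type*} {m n p : ℕ} (A : Fin p → Matrix (Fin m) (Fin n) R) :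
    Matrix (Fin p × Fin m) (Fin p × Fin n) R :=
  Matrix.of fun ir jc => A (ir.1 - jc.1) ir.2 jc.2

/-- Stack the frontal slices vertically. -/
def unfoldT {R : Type*} {n s p : ℕ} (B : Fin p → Matrix (Fin n) (Fin s) R) :
    Matrix (Fin p × Fin n) (Fin s) R :=
  Matrix.of fun ir c => B ir.1 ir.2 c

/-- Inverse of `unfoldT`. -/
def foldT {R : Type*} {m s p : ℕ} (M : Matrix (Fin p × Fin m) (Fin s) R) :
    Fin p → Matrix (Fin m) (Fin s) R :=
  fun k => Matrix.of fun r c => M (k, r) c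

/-- The tensor T-product `A * B := fold (bcirc A · unfold B)`. -/
def tProd {R : Type*} [CommRing R] {m n s p : ℕ}
    (A : Fin p → Matrix (Fin m) (Fin n) R) (B : Fin p → Matrix (Fin n) (Fin s) R) :
    Fin p → Matrix (Fin m) (Fin s) R :=
  foldT (bcirc A * unfoldT B)

/-- Tensor transpose: transpose every frontal slice and reverse the order of
slices `2, …, p` (zero-based: slice `k` of `Aᵀ` is `(A (-k))ᵀ`). -/
def tT {R : Type*} {m n p : ℕ} (A : Fin p → Matrix (Fin m) (Fin n) R) :
    Fin p → Matrix (Fin n) (Fin m) R :=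
  fun k => (A (-k))ᵀ

/-- The identity tensor: first frontal slice is the identity matrix, the others vanish. -/
def idT {R : Type*} [CommRing R] {n p : ℕ} [NeZero p] :
    Fin p → Matrix (Fin n) (Fin n) R :=
  fun k => if k = 0 then 1 else 0


attribute [local instance] Matrix.normedAddCommGroup Matrix.normedSpace

/-!
The loss `V ↦ M (σ (V * A + B))` is the composite of an affine map, the entrywise activation
and `M`, so by the chain rule its derivative along a unit tensor `E` is the entrywise pairing of
`δA` with `σ'(Z) ⊙ (E * A)`. Moving `σ'(Z)` across the pairing and using that right
T-multiplication by `A` is adjoint to right T-multiplication by `Aᵀ` turns this into the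
`E`-entry of `(δA ⊙ σ'(Z)) * Aᵀ`.
-/

section TInner

variable {ι α β R : Type*} [Fintype ι] [Fintype α] [Fintype β] [CommSemiring R]

def tInner (X Y : ι → Matrix α β R) : R :=
  ∑ k, ∑ r, ∑ c, X k r c * Y k r c

theorem tInner_single_left [DecidableEq ι] [DecidableEq α] [DecidableEq β]
    (k : ι) (r : α) (c : β) (Y : ι → Matrix α β R) :
    tInner (Pi.single k (single r c 1)) Y = Y k r c := by
  rw [tInner, Fintype.sum_eq_single k fun j hj => by simp [hj]]
  simp [single_apply, ite_and]

theorem tInner_hadamard_left (G H Y : ι → Matrix α β R) :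
    tInner (fun k => G k ⊙ H k) Y = tInner H (fun k => Y k ⊙ G k) := by
  simp only [tInner, hadamard_apply]
  exact Fintype.sum_congr _ _ fun k => Fintype.sum_congr _ _ fun r =>
    Fintype.sum_congr _ _ fun c => by ring

theorem LinearMap.apply_eq_tInner [DecidableEq ι] [DecidableEq α] [DecidableEq β]
    (f : (ι → Matrix α β R) →ₗ[R] R) (H : ι → Matrix α β R) :
    f H = tInner H (fun k => of fun r c => f (Pi.single k (Matrix.single r c 1))) := by
  conv_lhs => rw [← Finset.univ_sum_single H]
  simp only [tInner, map_sum, of_apply]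
  refine Fintype.sum_congr _ _ fun k => ?_
  have expand := congrArg (f ∘ₗ LinearMap.single R (fun _ => Matrix α β R) k)
    (matrix_eq_sum_single (H k))
  simp only [map_sum, LinearMap.comp_apply, LinearMap.coe_single] at expand
  rw [expand]
  refine Fintype.sum_congr _ _ fun r => Fintype.sum_congr _ _ fun c => ?_
  rw [← smul_eq_mul, ← map_smul, ← Pi.single_smul, Matrix.smul_single, smul_eq_mul, mul_one]

def hadamardLeft (G : ι → Matrix α β R) : (ι → Matrix α β R) →ₗ[R] (ι → Matrix α β R) where
  toFun H k := G k ⊙ H k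
  map_add' _ _ := funext fun _ => hadamard_add _ _ _
  map_smul' t _ := funext fun _ => hadamard_smul _ _ t

end TInner

section TProduct

variable {R : Type*} [CommRing R] {m n s p : ℕ}

theorem tProd_apply (X : Fin p → Matrix (Fin m) (Fin n) R) (A : Fin p → Matrix (Fin n) (Fin s) R)
    (k : Fin p) (r : Fin m) (c : Fin s) :
    tProd X A k r c = ∑ j, ∑ q, X (k - j) r q * A j q c := by
  simp [tProd, foldT, bcirc, unfoldT, Matrix.mul_apply, Fintype.sum_prod_type]

theorem tInner_tProd_left [NeZero p] (X : Fin p → Matrix (Fin m) (Fin n) R)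
    (A : Fin p → Matrix (Fin n) (Fin s) R) (Y : Fin p → Matrix (Fin m) (Fin s) R) :
    tInner (tProd X A) Y = tInner X (tProd Y (tT A)) := by
  have lhs : tInner (tProd X A) Y =
      ∑ j, ∑ k, ∑ r, ∑ q, ∑ c, X (k - j) r q * A j q c * Y k r c := by
    simp only [tInner, tProd_apply, Finset.sum_mul]
    calc _ = ∑ k, ∑ r, ∑ j, ∑ q, ∑ c, X (k - j) r q * A j q c * Y k r c := by
          refine Finset.sum_congr rfl fun k _ => Finset.sum_congr rfl fun r _ => ?_
          rw [Finset.sum_comm]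
          exact Finset.sum_congr rfl fun j _ => Finset.sum_comm
      _ = ∑ k, ∑ j, ∑ r, ∑ q, ∑ c, X (k - j) r q * A j q c * Y k r c :=
          Finset.sum_congr rfl fun k _ => Finset.sum_comm
      _ = _ := Finset.sum_comm
  have rhs : tInner X (tProd Y (tT A)) =
      ∑ j, ∑ k, ∑ r, ∑ q, ∑ c, X (k - j) r q * A j q c * Y k r c := by
    simp only [tInner, tProd_apply, tT, transpose_apply, Finset.mul_sum]
    calc _ = ∑ k, ∑ r, ∑ q, ∑ j, ∑ c, X k r q * A j q c * Y (k + j) r c := by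
          refine Finset.sum_congr rfl fun k _ => Finset.sum_congr rfl fun r _ =>
            Finset.sum_congr rfl fun q _ => ?_
          rw [← Equiv.sum_comp (Equiv.neg (Fin p))]
          simp only [Equiv.neg_apply, neg_neg, sub_neg_eq_add]
          exact Finset.sum_congr rfl fun j _ => Finset.sum_congr rfl fun c _ => by ring
      _ = ∑ k, ∑ r, ∑ j, ∑ q, ∑ c, X k r q * A j q c * Y (k + j) r c :=
          Finset.sum_congr rfl fun k _ => Finset.sum_congr rfl fun r _ => Finset.sum_comm
      _ = ∑ k, ∑ j, ∑ r, ∑ q, ∑ c, X k r q * A j q c * Y (k + j) r c :=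
          Finset.sum_congr rfl fun k _ => Finset.sum_comm
      _ = ∑ j, ∑ k, ∑ r, ∑ q, ∑ c, X k r q * A j q c * Y (k + j) r c := Finset.sum_comm
      _ = _ := by
          refine Finset.sum_congr rfl fun j _ => ?_
          rw [← Equiv.sum_comp (Equiv.subRight j)]
          simp only [Equiv.subRight_apply, sub_add_cancel]
  rw [lhs, rhs]

def tProdRight (A : Fin p → Matrix (Fin n) (Fin s) R) :
    (Fin p → Matrix (Fin m) (Fin n) R) →ₗ[R] (Fin p → Matrix (Fin m) (Fin s) R) where
  toFun X := tProd X A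
  map_add' _ _ := by
    ext k r c
    simp [tProd_apply, add_mul, Finset.sum_add_distrib]
  map_smul' _ _ := by
    ext k r c
    simp [tProd_apply, Finset.mul_sum, mul_assoc]

end TProduct

theorem hasFDerivAt_entrywise {𝕜 ι α β : Type*} [NontriviallyNormedField 𝕜] [CompleteSpace 𝕜]
    [Fintype ι] [Fintype α] [Fintype β] {σ : 𝕜 → 𝕜} {X : ι → Matrix α β 𝕜}
    (hσ : ∀ k r c, DifferentiableAt 𝕜 σ (X k r c)) :
    HasFDerivAt (fun Y k => of fun r c => σ (Y k r c))
      (hadamardLeft fun k => of fun r c => deriv σ (X k r c)).toContinuousLinearMap X := by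
  refine hasFDerivAt_pi'' fun k => hasFDerivAt_pi'' fun r => hasFDerivAt_pi'' fun c => ?_
  let entry : (ι → Matrix α β 𝕜) →L[𝕜] 𝕜 :=
    (ContinuousLinearMap.proj (R := 𝕜) (φ := fun _ : β => 𝕜) c).comp
      ((ContinuousLinearMap.proj (R := 𝕜) (φ := fun _ : α => β → 𝕜) r).comp
        (ContinuousLinearMap.proj (R := 𝕜) (φ := fun _ : ι => Matrix α β 𝕜) k))
  exact ((hσ k r c).hasDerivAt.comp_hasFDerivAt X entry.hasFDerivAt).congr_fderiv (by ext; rfl)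

/-- Tensor back-propagation: for the layer `A_{j+1} = σ(W * A + B)` and a scalar loss
`M`, the gradient w.r.t. the weight tensor `W` is `δW = (δA ⊙ σ'(Z)) * Aᵀ`,
stated entrywise via directional derivatives along the standard basis. -/
theorem tensor_backprop {m n s p : ℕ}
    (σ : ℝ → ℝ) (hσ : Differentiable ℝ σ)
    (W : Fin p → Matrix (Fin m) (Fin n) ℝ)
    (A : Fin p → Matrix (Fin n) (Fin s) ℝ)
    (B : Fin p → Matrix (Fin m) (Fin s) ℝ)
    (M : (Fin p → Matrix (Fin m) (Fin s) ℝ) → ℝ)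
    (hM : Differentiable ℝ M)
    -- the pre-activation `Z = W * A + B` and entrywise activation
    (Z : (Fin p → Matrix (Fin m) (Fin n) ℝ) → Fin p → Matrix (Fin m) (Fin s) ℝ)
    (hZ : Z = fun V => tProd V A + B)
    (act : (Fin p → Matrix (Fin m) (Fin s) ℝ) → Fin p → Matrix (Fin m) (Fin s) ℝ)
    (hact : act = fun X k => Matrix.of fun r c => σ (X k r c))
    -- the backpropagated error `δA_{j+1} = ∂M/∂A_{j+1}` at the layer output
    (δA : Fin p → Matrix (Fin m) (Fin s) ℝ)
    (hδA : δA = fun k => Matrix.of fun r c =>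
      fderiv ℝ M (act (Z W)) (Pi.single k (Matrix.single r c 1)))
    -- the entrywise derivative `σ'(Z_{j+1})`
    (gσ : Fin p → Matrix (Fin m) (Fin s) ℝ)
    (hgσ : gσ = fun k => Matrix.of fun r c => deriv σ (Z W k r c)) :
    ∀ (k : Fin p) (r : Fin m) (c : Fin n),
      fderiv ℝ (fun V => M (act (Z V))) W (Pi.single k (Matrix.single r c 1)) =
        tProd (fun j => Matrix.of fun r' c' => δA j r' c' * gσ j r' c') (tT A) k r c := by
  intro k r c
  have : NeZero p := ⟨k.pos.ne'⟩
  have hZd : HasFDerivAt Z (tProdRight A).toContinuousLinearMap W :=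
    hZ ▸ (tProdRight A).toContinuousLinearMap.hasFDerivAt.add_const B
  have hactd : HasFDerivAt act (hadamardLeft gσ).toContinuousLinearMap (Z W) :=
    hact ▸ hgσ ▸ hasFDerivAt_entrywise fun _ _ _ => hσ _
  set E : Fin p → Matrix (Fin m) (Fin n) ℝ := Pi.single k (Matrix.single r c 1)
  calc fderiv ℝ (fun V => M (act (Z V))) W E
      = fderiv ℝ M (act (Z W)) (fun j => gσ j ⊙ tProd E A j) :=
        ((hM _).hasFDerivAt.comp W (hactd.comp W hZd)).fderiv ▸ rfl
    _ = tInner (fun j => gσ j ⊙ tProd E A j) δA :=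
        hδA ▸ LinearMap.apply_eq_tInner (fderiv ℝ M (act (Z W))).toLinearMap _
    _ = tInner (tProd E A) (fun j => δA j ⊙ gσ j) := tInner_hadamard_left _ _ _
    _ = tInner E (tProd (fun j => δA j ⊙ gσ j) (tT A)) := tInner_tProd_left _ _ _
    _ = _ := tInner_single_left _ _ _ _
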